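/- Let R > 0, 0 < ν ≤ 1, and define h_±(x) := (1/ν)·( −sin²[x/(2R)] ± cos[x/(2R)]·√(ν² − sin²[x/(2R)]) ). Then for every x with 0 < x < 2R·arcsin ν, both values h₊(x) and h₋(x) lie in the interval [−1, 1] and satisfy the inversion identity (1 + ν·h_±(x))·sin[x/(2R)] = ν·√(1 − h_±(x)²)·cos[x/(2R)]. -/

import Mathlib

open Real

/-- `h₊(x) = (1/ν)(−sin²[x/(2R)] + cos[x/(2R)] √(ν² − sin²[x/(2R)]))`. -/
noncomputable def hPlus (R ν x : ℝ) : ℝ :=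
  (1 / ν) * (-(sin (x / (2 * R))) ^ 2
    + cos (x / (2 * R)) * Real.sqrt (ν ^ 2 - (sin (x / (2 * R))) ^ 2))

/-- `h₋(x) = (1/ν)(−sin²[x/(2R)] − cos[x/(2R)] √(ν² − sin²[x/(2R)]))`. -/
noncomputable def hMinus (R ν x : ℝ) : ℝ :=
  (1 / ν) * (-(sin (x / (2 * R))) ^ 2
    - cos (x / (2 * R)) * Real.sqrt (ν ^ 2 - (sin (x / (2 * R))) ^ 2))

/-!
With `s = sin t`, `c = cos t` and `q = ±√(ν² − s²)`, both values are `h = (c q − s²)/ν`,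
and the relations `c² = 1 − s²`, `q² = ν² − s²` give `1 − h² = (s (c + q)/ν)²` and
`1 + ν h = c (c + q)`. The square makes `|h| ≤ 1`, and its root is `s (c + q)/ν` as soon as
`c + q ≥ 0`; this holds for `q = −√(ν² − s²)` because `ν ≤ 1` forces `√(ν² − s²) ≤ c`.
-/

section Algebra

variable {ν s c q : ℝ}

theorem one_sub_sq_eq_sq (hν : ν ≠ 0) (hq : q ^ 2 = ν ^ 2 - s ^ 2) (hc : c ^ 2 = 1 - s ^ 2) :
    1 - ((1 / ν) * (-s ^ 2 + c * q)) ^ 2 = (s * (c + q) / ν) ^ 2 := by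
  field_simp
  linear_combination (-1 - (c ^ 2 - 1 + s ^ 2)) * hq - ν ^ 2 * hc

theorem mem_Icc_and_inversion (hν : 0 < ν) (hq : q ^ 2 = ν ^ 2 - s ^ 2)
    (hc : c ^ 2 = 1 - s ^ 2) (hs : 0 ≤ s) (hcq : 0 ≤ c + q) :
    (1 / ν) * (-s ^ 2 + c * q) ∈ Set.Icc (-1 : ℝ) 1 ∧
      (1 + ν * ((1 / ν) * (-s ^ 2 + c * q))) * s =
        ν * √(1 - ((1 / ν) * (-s ^ 2 + c * q)) ^ 2) * c := by
  have hsq := one_sub_sq_eq_sq hν.ne' hq hc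
  refine ⟨?_, ?_⟩
  · rw [Set.mem_Icc, ← abs_le, ← sq_le_one_iff_abs_le_one]
    nlinarith [sq_nonneg (s * (c + q) / ν)]
  · rw [hsq, sqrt_sq (by positivity)]
    field_simp
    linear_combination -s * hc

end Algebra

theorem sin_lt_of_lt_arcsin {t y : ℝ} (ht : -(π / 2) ≤ t) (hty : t < arcsin y) : sin t < y :=
  (lt_arcsin_iff_sin_lt' ⟨ht, hty.trans_le (arcsin_le_pi_div_two y)⟩).1 hty

theorem hMinus_eq (R ν x : ℝ) :
    hMinus R ν x = (1 / ν) * (-(sin (x / (2 * R))) ^ 2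
      + cos (x / (2 * R)) * -√(ν ^ 2 - (sin (x / (2 * R))) ^ 2)) := by
  rw [hMinus]
  ring

/-- For `0 < ν ≤ 1` and `0 < x < 2R arcsin ν`, both `h₊(x)` and `h₋(x)` lie in
`[−1, 1]` and satisfy the inversion identity
`(1 + ν h)·sin[x/(2R)] = ν √(1 − h²)·cos[x/(2R)]`. -/
theorem h_pm_mem_and_inversion (R ν : ℝ) (hR : 0 < R) (hν : 0 < ν) (hν1 : ν ≤ 1)
    (x : ℝ) (hx0 : 0 < x) (hx : x < 2 * R * arcsin ν) :
    hPlus R ν x ∈ Set.Icc (-1 : ℝ) 1 ∧ hMinus R ν x ∈ Set.Icc (-1 : ℝ) 1 ∧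
    (1 + ν * hPlus R ν x) * sin (x / (2 * R)) =
      ν * Real.sqrt (1 - (hPlus R ν x) ^ 2) * cos (x / (2 * R)) ∧
    (1 + ν * hMinus R ν x) * sin (x / (2 * R)) =
      ν * Real.sqrt (1 - (hMinus R ν x) ^ 2) * cos (x / (2 * R)) := by
  set t := x / (2 * R)
  have ht0 : 0 < t := by positivity
  have ht : t < arcsin ν := by rwa [div_lt_iff₀ (by positivity), mul_comm]
  have htπ : t < π / 2 := ht.trans_le (arcsin_le_pi_div_two ν)
  have hs0 : 0 < sin t := sin_pos_of_pos_of_lt_pi ht0 (by linarith [pi_pos])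
  have hsν : sin t < ν := sin_lt_of_lt_arcsin (by linarith) ht
  have hc0 : 0 < cos t := cos_pos_of_mem_Ioo ⟨by linarith, htπ⟩
  have hq : √(ν ^ 2 - sin t ^ 2) ^ 2 = ν ^ 2 - sin t ^ 2 := sq_sqrt (by nlinarith)
  have hqc : √(ν ^ 2 - sin t ^ 2) ≤ cos t := by
    rw [sqrt_le_left hc0.le, cos_sq']
    nlinarith
  have hplus := mem_Icc_and_inversion hν hq (cos_sq' t) hs0.le (by positivity)
  have hminus := mem_Icc_and_inversion hν (by rwa [neg_sq]) (cos_sq' t) hs0.le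
    (by linarith : 0 ≤ cos t + -√(ν ^ 2 - sin t ^ 2))
  rw [hPlus, hMinus_eq]
  exact ⟨hplus.1, hminus.1, hplus.2, hminus.2⟩
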